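/- Let p_a = 0.5, p_b = 0.91, p_c = 0.26, and define r_b = (1/2)(1−p_a) + (1/2)(1−p_b), r_c = (1/2)(1−p_a) + (1/2)(1−p_c). Let π̃₀ be the stationary probability of residue class 0 for the 3-state Markov chain with success probability r_b in state 0 and r_c in states 1 and 2 (i.e. (π̃₀,π̃₁,π̃₂) solves r_c' π₂-type balance equations with 1−p_b replaced by r_b and 1−p_c by r_c). Then the overall success probability p = r_b π̃₀ + r_c (1−π̃₀) satisfies p > 1/2 (numerically p ≈ 0.5078). -/

import Mathlib

/-! By the Markov chain tree theorem, the stationary distribution of the mod-3 chain is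
proportional to the total weight of the spanning trees directed into each state, namely
`(1 - rc + rc², 1 - rc + rb·rc, 1 - rb + rb·rc)`. These weights solve the balance equations,
and their sum `3 - rb - 2rc + rc² + 2rb·rc` is the determinant of the linear system, so the
stationary distribution is unique whenever it is nonzero. For `rb = 59/200`, `rc = 31/50`
this gives `π̃₀ = 49/142` and `p = 14423/28400 ≈ 0.50785`. -/

/-- A stationary distribution of the mod-3 chain whose success probability is
`rb` in residue class 0 and `rc` in residue classes 1 and 2 (the chain moves
`+1 mod 3` on success and `-1 mod 3` on failure). -/
def IsStationaryMix (rb rc : ℝ) (π : Fin 3 → ℝ) : Prop :=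
  (∀ i, 0 ≤ π i) ∧ π 0 + π 1 + π 2 = 1 ∧
  rc * π 2 + (1 - rc) * π 1 = π 0 ∧
  rb * π 0 + (1 - rc) * π 2 = π 1 ∧
  rc * π 1 + (1 - rb) * π 0 = π 2

namespace IsStationaryMix

def treeWeight (rb rc : ℝ) : Fin 3 → ℝ :=
  ![1 - rc + rc ^ 2, 1 - rc + rb * rc, 1 - rb + rb * rc]

def totalTreeWeight (rb rc : ℝ) : ℝ :=
  treeWeight rb rc 0 + treeWeight rb rc 1 + treeWeight rb rc 2

variable {rb rc : ℝ}

lemma treeWeight_nonneg (hb₀ : 0 ≤ rb) (hb₁ : rb ≤ 1) (hc₀ : 0 ≤ rc) (hc₁ : rc ≤ 1) (i : Fin 3) :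
    0 ≤ treeWeight rb rc i := by
  fin_cases i <;>
    simp only [treeWeight, Fin.zero_eta, Fin.mk_one, Fin.reduceFinMk, Matrix.cons_val,
      Matrix.cons_val_zero, Matrix.cons_val_one] <;>
    nlinarith [mul_nonneg hb₀ hc₀]

lemma totalTreeWeight_pos (hb₀ : 0 ≤ rb) (hb₁ : rb ≤ 1) (hc₀ : 0 ≤ rc) (hc₁ : rc ≤ 1) :
    0 < totalTreeWeight rb rc := by
  have h₁ := treeWeight_nonneg hb₀ hb₁ hc₀ hc₁ 1
  have h₂ := treeWeight_nonneg hb₀ hb₁ hc₀ hc₁ 2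
  have h₀ : 0 < treeWeight rb rc 0 := by
    simp only [treeWeight, Matrix.cons_val_zero]
    nlinarith [sq_nonneg (rc - 1 / 2)]
  unfold totalTreeWeight
  linarith

lemma normalized_treeWeight (hb₀ : 0 ≤ rb) (hb₁ : rb ≤ 1) (hc₀ : 0 ≤ rc) (hc₁ : rc ≤ 1) :
    IsStationaryMix rb rc (fun i ↦ treeWeight rb rc i / totalTreeWeight rb rc) := by
  have hD := totalTreeWeight_pos hb₀ hb₁ hc₀ hc₁
  refine ⟨fun i ↦ div_nonneg (treeWeight_nonneg hb₀ hb₁ hc₀ hc₁ i) hD.le, ?_, ?_, ?_, ?_⟩ <;>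
    field_simp <;>
    simp only [totalTreeWeight, treeWeight, Matrix.cons_val_zero, Matrix.cons_val_one,
      Matrix.cons_val_two, Matrix.head_cons, Matrix.tail_cons] <;>
    ring

lemma eq_normalized_treeWeight {π : Fin 3 → ℝ} (h : IsStationaryMix rb rc π)
    (hD : totalTreeWeight rb rc ≠ 0) (i : Fin 3) :
    π i = treeWeight rb rc i / totalTreeWeight rb rc := by
  obtain ⟨-, hsum, h₀, h₁, -⟩ := h
  rw [eq_div_iff hD]
  fin_cases i <;>
    simp only [totalTreeWeight, treeWeight, Fin.zero_eta, Fin.mk_one, Fin.reduceFinMk,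
      Matrix.cons_val_zero, Matrix.cons_val_one, Matrix.cons_val_two, Matrix.head_cons,
      Matrix.tail_cons]
  · linear_combination (1 - rc + rc ^ 2) * hsum - (2 - rc) * h₀ + (2 * rc - 1) * h₁
  · linear_combination (1 - rc + rb * rc) * hsum + (1 - rc + rb * rc - rb * (1 + rc)) * h₀
      - (1 + rc) * h₁
  · linear_combination (1 - rb + rb * rc) * hsum + (1 + rb) * h₀
      + (1 - rb + rb * rc + (1 + rb) * (1 - rc)) * h₁

end IsStationaryMix

open IsStationaryMix in
/-- for the mixed channel `C_M^{0.5}` with success probabilities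
`rb = (1-pa)/2 + (1-pb)/2` in class 0 and `rc = (1-pa)/2 + (1-pc)/2`
otherwise, the stationary distribution exists and the overall stationary
success probability `p = rb·π̃₀ + rc·(1-π̃₀)` exceeds `1/2`
(numerically `p ≈ 0.5078`). -/
theorem stmt_4 (pa pb pc rb rc : ℝ)
    (hpa : pa = 0.5) (hpb : pb = 0.91) (hpc : pc = 0.26)
    (hrb : rb = (1 / 2) * (1 - pa) + (1 / 2) * (1 - pb))
    (hrc : rc = (1 / 2) * (1 - pa) + (1 / 2) * (1 - pc)) :
    (∃ π : Fin 3 → ℝ, IsStationaryMix rb rc π) ∧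
    ∀ π : Fin 3 → ℝ, IsStationaryMix rb rc π →
      rb * π 0 + rc * (1 - π 0) > 1 / 2 ∧
      |rb * π 0 + rc * (1 - π 0) - 0.5078| < 0.001 := by
  obtain rfl : rb = 59 / 200 := by rw [hrb, hpa, hpb]; norm_num
  obtain rfl : rc = 31 / 50 := by rw [hrc, hpa, hpc]; norm_num
  refine ⟨⟨_, normalized_treeWeight (by norm_num) (by norm_num) (by norm_num) (by norm_num)⟩, ?_⟩
  intro π hπ
  have hD : totalTreeWeight (59 / 200) (31 / 50) = 2769 / 1250 := by
    norm_num [totalTreeWeight, treeWeight, Matrix.cons_val_two]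
  have hπ₀ : π 0 = 49 / 142 := by
    rw [hπ.eq_normalized_treeWeight (by rw [hD]; norm_num) 0, hD]
    norm_num [treeWeight]
  rw [hπ₀, abs_lt]
  norm_num
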